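/- Let α = (1+√−7)/2 and let P_b be the Barnes lattice, the rank-3 Hermitian ℤ[α]-lattice with Gram matrix [[2, α, −1], [ᾱ, 2, α], [−1, ᾱ, 2]] where ᾱ = 1 − α. Then det of this Gram matrix is 1 (P_b is unimodular) and the Hermitian minimum of P_b is 2. -/
import Mathlib


open Matrix Complex
open scoped ComplexOrder

/-- α = (1+√−7)/2, a root of α² − α + 2 = 0, realized in ℂ. -/
noncomputable def α7 : ℂ := (1 + Complex.I * Real.sqrt 7) / 2

/-- The ring of integers ℤ[α] of ℚ(√−7), as a subset of ℂ. -/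
noncomputable def O7 : Set ℂ := {z | ∃ a b : ℤ, z = (a : ℂ) + (b : ℂ) * α7}

/-- The Gram matrix of the Barnes lattice P_b over ℤ[α]. -/
noncomputable def BarnesGram : Matrix (Fin 3) (Fin 3) ℂ :=
  !![2, α7, -1; (starRingEnd ℂ) α7, 2, α7; -1, (starRingEnd ℂ) α7, 2]

/-- α7 satisfies α² = α − 2. -/
lemma α7_sq : α7 ^ 2 = α7 - 2 := by
  have h7 : (Real.sqrt 7 : ℂ) ^ 2 = 7 := by
    rw [← Complex.ofReal_pow, Real.sq_sqrt (by norm_num : (7:ℝ) ≥ 0)]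
    norm_num
  rw [α7]
  linear_combination (Complex.I ^ 2 / 4) * h7 + ((7:ℂ)/4) * Complex.I_sq

/-- The conjugate of α7 is 1 − α7. -/
lemma α7_conj : (starRingEnd ℂ) α7 = 1 - α7 := by
  rw [α7, map_div₀, map_add, _root_.map_mul, Complex.conj_I, Complex.conj_ofReal]
  simp only [_root_.map_one, _root_.map_ofNat]
  ring

/-- 1 and α7 are linearly independent over ℤ. -/
lemma int_zero_of_comb (a b : ℤ) (h : (a:ℂ) + (b:ℂ) * α7 = 0) : a = 0 ∧ b = 0 := by
  have him := congrArg Complex.im h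
  have hre := congrArg Complex.re h
  simp [α7, Complex.add_im, Complex.mul_im, Complex.add_re, Complex.mul_re,
    Complex.div_re, Complex.div_im, Complex.normSq] at him hre
  subst him
  norm_num at hre
  exact ⟨by exact_mod_cast hre, rfl⟩

set_option maxHeartbeats 4000000 in
lemma barnes_int_min (a1 b1 a2 b2 a3 b3 : ℤ)
    (hne : ¬(a1 = 0 ∧ b1 = 0 ∧ a2 = 0 ∧ b2 = 0 ∧ a3 = 0 ∧ b3 = 0)) :
    2 ≤ 2*(a1*a1+a1*b1+2*b1*b1)+2*(a2*a2+a2*b2+2*b2*b2)+2*(a3*a3+a3*b3+2*b3*b3)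
      + (a1*a2+4*b1*a2-3*a1*b2+2*b1*b2) + (a2*a3+4*b2*a3-3*a2*b3+2*b2*b3)
      - (2*a1*a3 + a1*b3 + b1*a3 + 4*b1*b3) := by
  by_contra hc
  push_neg at hc
  have hq : 2*(a1*a1+a1*b1+2*b1*b1)+2*(a2*a2+a2*b2+2*b2*b2)+2*(a3*a3+a3*b3+2*b3*b3)
      + (a1*a2+4*b1*a2-3*a1*b2+2*b1*b2) + (a2*a3+4*b2*a3-3*a2*b3+2*b2*b3)
      - (2*a1*a3 + a1*b3 + b1*a3 + 4*b1*b3) ≤ 1 := by omega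
  have h1 : a1^2 ≤ 3 := by
    nlinarith [hq, sq_nonneg (8*b1+4*a2+2*b2-a3-4*b3+2*a1), sq_nonneg (4*a2+2*b2+3*a3-2*b3),
      sq_nonneg (2*b2+a3+b3-a1), sq_nonneg (2*a3+b3), sq_nonneg (2*b3+a1)]
  have h2 : b1^2 ≤ 3 := by
    nlinarith [hq, sq_nonneg (4*a1+a2-3*b2-2*a3-b3+2*b1), sq_nonneg (15*a2+11*b2+6*a3-11*b3+14*b1),
      sq_nonneg (8*b2+3*a3+7*b3+2*b1), sq_nonneg (15*a3+11*b3-14*b1), sq_nonneg (4*b3-b1)]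
  have h3 : a2^2 ≤ 3 := by
    nlinarith [hq, sq_nonneg (4*a1+2*b1-3*b2-2*a3-b3+a2), sq_nonneg (2*b1+b2-b3+a2),
      sq_nonneg (8*b2+5*a3+6*b3+2*a2), sq_nonneg (23*a3-6*b3+14*a2), sq_nonneg (12*b3-5*a2)]
  have h4 : b2^2 ≤ 3 := by
    nlinarith [hq, sq_nonneg (4*a1+2*b1+a2-2*a3-b3-3*b2), sq_nonneg (2*b1+a2-b3+b2),
      sq_nonneg (4*a2+3*a3-2*b3+2*b2), sq_nonneg (15*a3+18*b3+14*b2), sq_nonneg (2*b3+b2)]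
  have h5 : a3^2 ≤ 3 := by
    nlinarith [hq, sq_nonneg (4*a1+2*b1+a2-3*b2-b3-2*a3), sq_nonneg (2*b1+a2+b2-b3),
      sq_nonneg (4*a2+2*b2-2*b3+3*a3), sq_nonneg (2*b2+2*b3+a3), sq_nonneg (4*b3+a3)]
  have h6 : b3^2 ≤ 3 := by
    nlinarith [hq, sq_nonneg (4*a1+2*b1+a2-3*b2-2*a3-b3), sq_nonneg (2*b1+a2+b2-b3),
      sq_nonneg (4*a2+2*b2+3*a3-2*b3), sq_nonneg (2*b2+a3+2*b3), sq_nonneg (2*a3+b3)]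
  have g1 : -1 ≤ a1 ∧ a1 ≤ 1 := by constructor <;> nlinarith [h1]
  have g2 : -1 ≤ b1 ∧ b1 ≤ 1 := by constructor <;> nlinarith [h2]
  have g3 : -1 ≤ a2 ∧ a2 ≤ 1 := by constructor <;> nlinarith [h3]
  have g4 : -1 ≤ b2 ∧ b2 ≤ 1 := by constructor <;> nlinarith [h4]
  have g5 : -1 ≤ a3 ∧ a3 ≤ 1 := by constructor <;> nlinarith [h5]
  have g6 : -1 ≤ b3 ∧ b3 ≤ 1 := by constructor <;> nlinarith [h6]
  obtain ⟨l1, r1⟩ := g1; obtain ⟨l2, r2⟩ := g2; obtain ⟨l3, r3⟩ := g3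
  obtain ⟨l4, r4⟩ := g4; obtain ⟨l5, r5⟩ := g5; obtain ⟨l6, r6⟩ := g6
  clear hc h1 h2 h3 h4 h5 h6
  interval_cases a1 <;> interval_cases b1 <;> interval_cases a2 <;>
    interval_cases b2 <;> interval_cases a3 <;> interval_cases b3 <;> omega

/-- The Barnes lattice P_b, the rank-3 Hermitian ℤ[α]-lattice with the above Gram
matrix, is unimodular (its Gram determinant is 1) and has Hermitian minimum 2:
the least value of h(v,v) = v* G v over nonzero coordinate vectors v with
entries in ℤ[α] is 2. -/
theorem stmt16 :
    BarnesGram.det = 1 ∧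
    IsLeast {x : ℝ | ∃ v : Fin 3 → ℂ, (∀ i, v i ∈ O7) ∧ v ≠ 0 ∧
      (star v ⬝ᵥ BarnesGram.mulVec v).re = x} 2 := by
  constructor
  · simp [BarnesGram, Matrix.det_fin_three, α7_conj]
    linear_combination (2 : ℂ) * α7_sq
  constructor
  · refine ⟨![1, 0, 0], ?_, ?_, ?_⟩
    · intro i
      fin_cases i
      · exact ⟨1, 0, by norm_num⟩
      · exact ⟨0, 0, by norm_num⟩
      · exact ⟨0, 0, by norm_num⟩
    · intro h
      have := congrFun h 0
      simp at this
    · simp [BarnesGram, Matrix.mulVec, dotProduct, Fin.sum_univ_three]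
  · rintro x ⟨v, hmem, hne, rfl⟩
    obtain ⟨a1, b1, h0⟩ := hmem 0
    obtain ⟨a2, b2, h1⟩ := hmem 1
    obtain ⟨a3, b3, h2⟩ := hmem 2
    set Qi : ℤ := 2*(a1*a1+a1*b1+2*b1*b1)+2*(a2*a2+a2*b2+2*b2*b2)+2*(a3*a3+a3*b3+2*b3*b3)
      + (a1*a2+4*b1*a2-3*a1*b2+2*b1*b2) + (a2*a3+4*b2*a3-3*a2*b3+2*b2*b3)
      - (2*a1*a3 + a1*b3 + b1*a3 + 4*b1*b3) with hQi
    have hval : star v ⬝ᵥ BarnesGram.mulVec v = (Qi : ℂ) := by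
      simp only [BarnesGram, Matrix.mulVec, dotProduct, Fin.sum_univ_three,
        Pi.star_apply, Matrix.cons_val', Matrix.cons_val_zero, Matrix.cons_val_one,
        Matrix.head_cons, Matrix.empty_val', Matrix.cons_val_fin_one, Matrix.head_fin_const,
        Matrix.cons_val_two, Matrix.tail_cons, Matrix.of_apply]
      rw [h0, h1, h2]
      simp only [star_add, star_mul', Complex.star_def, map_add, _root_.map_mul, map_intCast,
        α7_conj, hQi]
      push_cast
      linear_combination ((-2*(b3:ℂ)*b3 - b2*b3 - 2*b2*a3 - 2*b2*b2 + 2*a2*b3 + 2*b1*b3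
        - b1*b2 - 2*b1*a2 - 2*b1*b1 + 2*a1*b2) : ℂ) * α7_sq
    have hnz : ¬(a1 = 0 ∧ b1 = 0 ∧ a2 = 0 ∧ b2 = 0 ∧ a3 = 0 ∧ b3 = 0) := by
      rintro ⟨e1, e2, e3, e4, e5, e6⟩
      apply hne
      funext i
      fin_cases i
      · simp [h0, e1, e2]
      · simp [h1, e3, e4]
      · simp [h2, e5, e6]
    have hmin := barnes_int_min a1 b1 a2 b2 a3 b3 hnz
    rw [hval, Complex.intCast_re]
    exact_mod_cast hmin
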